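/- Let M ⊆ M⁺ be a model class, α, γ > 0, and M̄ ∈ M⁺. Then for all ε > 0: dec^o_γ(M_α(M̄) ∪ {M̄}, M̄) ≤ dec^c_ε(M ∪ {M̄}, M̄) + max{0, α + 1/(2γ) − γ·ε²/2}. In particular, taking ε = √(2α/γ), dec^o_γ(M_α(M̄) ∪ {M̄}, M̄) ≤ dec^c_{√(2α/γ)}(M ∪ {M̄}, M̄) + 1/(2γ). -/

import Mathlib

open MeasureTheory ProbabilityTheory
open scoped ENNReal NNReal

noncomputable section

/-- The squared Hellinger distance between two measures, computed with respect to the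
common dominating measure `P + Q`. -/
def sqHellinger {Z : Type} [MeasurableSpace Z] (P Q : Measure Z) : ℝ :=
  ∫ z, (Real.sqrt ((P.rnDeriv (P + Q)) z).toReal
      - Real.sqrt ((Q.rnDeriv (P + Q)) z).toReal) ^ 2 ∂(P + Q)

/-- A model: a Markov kernel from decisions to distributions over reward/observation pairs,
with rewards supported in `[0,1]`, together with a maximizing decision
(whose existence is assumed). -/
structure Model (X Y : Type) [MeasurableSpace X] [MeasurableSpace Y] where
  k : Kernel X (ℝ × Y)
  markov : IsMarkovKernel k
  reward01 : ∀ x : X, (k x) {ry : ℝ × Y | ry.1 ∈ Set.Icc (0 : ℝ) 1}ᶜ = 0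
  opt : X
  opt_max : ∀ x : X, (∫ ry, ry.1 ∂(k x)) ≤ ∫ ry, ry.1 ∂(k opt)

variable {X Y : Type} [MeasurableSpace X] [MeasurableSpace Y]

/-- Mean reward `f^M(x)`. -/
def fm (M : Model X Y) (x : X) : ℝ := ∫ ry, ry.1 ∂(M.k x)

/-- Suboptimality gap `g^M(x) = f^M(π_M) - f^M(x)`. -/
def gap (M : Model X Y) (x : X) : ℝ := fm M M.opt - fm M x

/-- Expected suboptimality of a decision distribution `p` under model `M`. -/
def avgGap (p : ProbabilityMeasure X) (M : Model X Y) : ℝ :=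
  ∫ x, gap M x ∂(p : Measure X)

/-- Expected squared Hellinger distance between `M` and `Mbar` under `p`. -/
def avgHell (p : ProbabilityMeasure X) (M Mbar : Model X Y) : ℝ :=
  ∫ x, sqHellinger (M.k x) (Mbar.k x) ∂(p : Measure X)

/-- The constrained regret Decision-Estimation Coefficient. -/
def decC (ε : ℝ) (𝓜 : Set (Model X Y)) (Mbar : Model X Y) : ℝ :=
  ⨅ p : ProbabilityMeasure X,
    ⨆ M ∈ {M ∈ 𝓜 | avgHell p M Mbar ≤ ε ^ 2}, avgGap p M

/-- The offset regret Decision-Estimation Coefficient. -/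
def decO (γ : ℝ) (𝓜 : Set (Model X Y)) (Mbar : Model X Y) : ℝ :=
  ⨅ p : ProbabilityMeasure X, ⨆ M ∈ 𝓜, (avgGap p M - γ * avgHell p M Mbar)

/-- The constrained PAC Decision-Estimation Coefficient. -/
def decCpac (ε : ℝ) (𝓜 : Set (Model X Y)) (Mbar : Model X Y) : ℝ :=
  ⨅ p : ProbabilityMeasure X, ⨅ q : ProbabilityMeasure X,
    ⨆ M ∈ {M ∈ 𝓜 | avgHell q M Mbar ≤ ε ^ 2}, avgGap p M

/-- The offset PAC Decision-Estimation Coefficient. -/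
def decOpac (γ : ℝ) (𝓜 : Set (Model X Y)) (Mbar : Model X Y) : ℝ :=
  ⨅ p : ProbabilityMeasure X, ⨅ q : ProbabilityMeasure X,
    ⨆ M ∈ 𝓜, (avgGap p M - γ * avgHell q M Mbar)

/-- A distribution over a class of models, represented as a probability space together with
a (measurable) family of models belonging to the class. -/
structure ClassDist (X Y : Type) [MeasurableSpace X] [MeasurableSpace Y]
    (𝓜 : Set (Model X Y)) where
  (Ω : Type)
  [iΩ : MeasurableSpace Ω]
  (ν : Measure Ω)
  (prob : IsProbabilityMeasure ν)
  (m : Ω → Model X Y)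
  (mem : ∀ ω, m ω ∈ 𝓜)
  (meas : ∀ (x : X) (A : Set (ℝ × Y)), MeasurableSet A → Measurable fun ω => (m ω).k x A)

attribute [instance] ClassDist.iΩ

/-- `Mbar` is the mixture (mean) model of the class distribution `D`. -/
def IsMixtureOf {𝓜 : Set (Model X Y)} (D : ClassDist X Y 𝓜) (Mbar : Model X Y) : Prop :=
  ∀ (x : X) (A : Set (ℝ × Y)), MeasurableSet A →
    Mbar.k x A = ∫⁻ ω, (D.m ω).k x A ∂D.ν

/-- The convex hull of a model class: all mixtures of models in the class. -/
def convHull (𝓜 : Set (Model X Y)) : Set (Model X Y) :=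
  {Mbar | ∃ D : ClassDist X Y 𝓜, IsMixtureOf D Mbar}

/-- `dec^c_ε(𝓜) = sup_{Mbar ∈ co(𝓜)} dec^c_ε(𝓜 ∪ {Mbar}, Mbar)`. -/
def decCfull (ε : ℝ) (𝓜 : Set (Model X Y)) : ℝ :=
  ⨆ Mbar ∈ convHull 𝓜, decC ε (𝓜 ∪ {Mbar}) Mbar

/-- `dec^{c,pac}_ε(𝓜) = sup_{Mbar ∈ co(𝓜)} dec^{c,pac}_ε(𝓜, Mbar)`. -/
def decCpacFull (ε : ℝ) (𝓜 : Set (Model X Y)) : ℝ :=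
  ⨆ Mbar ∈ convHull 𝓜, decCpac ε 𝓜 Mbar

/-- The localized subclass `𝓜_α(Mbar)`. -/
def locClass (α : ℝ) (𝓜 : Set (Model X Y)) (Mbar : Model X Y) : Set (Model X Y) :=
  {M ∈ 𝓜 | fm M M.opt ≤ fm Mbar Mbar.opt + α}

/-- The greedy PAC Decision-Estimation Coefficient. -/
def decGpac (ε : ℝ) (𝓜 : Set (Model X Y)) (Mbar : Model X Y) : ℝ :=
  ⨅ q : ProbabilityMeasure X,
    ⨆ M ∈ {M ∈ 𝓜 | avgHell q M Mbar ≤ ε ^ 2}, (fm M M.opt - fm M Mbar.opt)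

/-- The PAC DEC with Hellinger constraints under both `p` and `q`. -/
def decAlt (ε : ℝ) (𝓜 : Set (Model X Y)) (Mbar : Model X Y) : ℝ :=
  ⨅ p : ProbabilityMeasure X, ⨅ q : ProbabilityMeasure X,
    ⨆ M ∈ {M ∈ 𝓜 | avgHell p M Mbar ≤ ε ^ 2 ∧ avgHell q M Mbar ≤ ε ^ 2}, avgGap p M

/-- Expected squared Hellinger distance to a randomized reference model. -/
def randAvgHell {𝓜 : Set (Model X Y)} (p : ProbabilityMeasure X) (M : Model X Y)
    (D : ClassDist X Y 𝓜) : ℝ :=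
  ∫ ω, avgHell p M (D.m ω) ∂D.ν

/-- The randomized offset regret DEC. -/
def decOrand (γ : ℝ) {𝓜₀ : Set (Model X Y)} (𝓜 : Set (Model X Y))
    (D : ClassDist X Y 𝓜₀) : ℝ :=
  ⨅ p : ProbabilityMeasure X, ⨆ M ∈ 𝓜, (avgGap p M - γ * randAvgHell p M D)

/-- The randomized constrained regret DEC. -/
def decCrand (ε : ℝ) {𝓜₀ : Set (Model X Y)} (𝓜 : Set (Model X Y))
    (D : ClassDist X Y 𝓜₀) : ℝ :=
  ⨅ p : ProbabilityMeasure X,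
    ⨆ M ∈ {M ∈ 𝓜 | randAvgHell p M D ≤ ε ^ 2}, avgGap p M

/-- The randomized offset PAC DEC. -/
def decOpacRand (γ : ℝ) {𝓜₀ : Set (Model X Y)} (𝓜 : Set (Model X Y))
    (D : ClassDist X Y 𝓜₀) : ℝ :=
  ⨅ p : ProbabilityMeasure X, ⨅ q : ProbabilityMeasure X,
    ⨆ M ∈ 𝓜, (avgGap p M - γ * randAvgHell q M D)

/-- The Bayesian offset regret DEC (sup over priors of the inf over decision distributions). -/
def bayesDecO (γ : ℝ) (𝓜 : Set (Model X Y)) (Mbar : Model X Y) : ℝ :=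
  sSup {x : ℝ | ∃ D : ClassDist X Y 𝓜,
    x = ⨅ p : ProbabilityMeasure X,
          ∫ ω, (avgGap p (D.m ω) - γ * avgHell p (D.m ω) Mbar) ∂D.ν}

/-- The Bayesian offset PAC DEC. -/
def bayesDecOpac (γ : ℝ) (𝓜 : Set (Model X Y)) (Mbar : Model X Y) : ℝ :=
  sSup {x : ℝ | ∃ D : ClassDist X Y 𝓜,
    x = ⨅ p : ProbabilityMeasure X, ⨅ q : ProbabilityMeasure X,
          ∫ ω, (avgGap p (D.m ω) - γ * avgHell q (D.m ω) Mbar) ∂D.ν}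

/-- Histories of interaction. -/
abbrev Hist (X Y : Type) (n : ℕ) := Fin n → X × ℝ × Y

/-- Prefix of a history. -/
def hPrefix {n : ℕ} (h : Hist X Y n) (t : ℕ) (ht : t ≤ n) : Hist X Y t :=
  fun i => h (Fin.castLE ht i)

/-- Law of the interaction history under model `M` and selection rule `sel`. -/
def histLaw (M : Model X Y) (sel : (n : ℕ) → Hist X Y n → Measure X) :
    (n : ℕ) → Measure (Hist X Y n)
  | 0 => Measure.dirac (fun i => i.elim0)
  | n + 1 =>
    (histLaw M sel n).bind fun h =>
      (sel n h).bind fun x =>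
        (M.k x).bind fun ry => Measure.dirac (Fin.snoc h (x, ry))

/-- A regret-minimization algorithm: a sequence of probability kernels from histories
to decisions. -/
structure RegAlg (X Y : Type) [MeasurableSpace X] [MeasurableSpace Y] where
  sel : (n : ℕ) → Hist X Y n → Measure X
  prob : ∀ n h, IsProbabilityMeasure (sel n h)
  meas : ∀ n, Measurable (sel n)

instance [Nonempty X] : Nonempty (RegAlg X Y) :=
  ⟨⟨fun _ _ => Measure.dirac (Classical.arbitrary X),
    fun _ _ => by infer_instance, fun _ => measurable_const⟩⟩

/-- Expected cumulative regret of algorithm `A` under model `M` over `T` rounds. -/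
def expRegret (M : Model X Y) (A : RegAlg X Y) (T : ℕ) : ℝ :=
  ∑ t ∈ Finset.range T, ∫ h, (∫ x, gap M x ∂(A.sel t h)) ∂(histLaw M A.sel t)

/-- A PAC algorithm with `T` rounds of interaction: exploration kernels together with an
output kernel. -/
structure PacAlg (X Y : Type) [MeasurableSpace X] [MeasurableSpace Y] (T : ℕ) where
  explore : (n : ℕ) → Hist X Y n → Measure X
  explore_prob : ∀ n h, IsProbabilityMeasure (explore n h)
  explore_meas : ∀ n, Measurable (explore n)
  out : Hist X Y T → Measure X
  out_prob : ∀ h, IsProbabilityMeasure (out h)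
  out_meas : Measurable out

/-- Risk of the PAC algorithm conditionally on the realized history. -/
def condRisk (M : Model X Y) {T : ℕ} (A : PacAlg X Y T) (h : Hist X Y T) : ℝ :=
  ∫ x, gap M x ∂(A.out h)

/-- Expected risk of PAC algorithm `A` under model `M`. -/
def pacRisk (M : Model X Y) {T : ℕ} (A : PacAlg X Y T) : ℝ :=
  ∫ h, condRisk M A h ∂(histLaw M A.explore T)

/-- The density-ratio bound `V(𝓜)`. -/
def Vval (𝓜 : Set (Model X Y)) : ℝ≥0∞ :=
  max (ENNReal.ofReal (Real.exp 1))
    (⨆ M ∈ 𝓜, ⨆ M' ∈ 𝓜, ⨆ x : X,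
      ⨆ A ∈ {A : Set (ℝ × Y) | MeasurableSet A}, M.k x A / M'.k x A)

/-- `C(T) = log (min (T, V(𝓜)))`. -/
def Cval (𝓜 : Set (Model X Y)) (T : ℕ) : ℝ :=
  Real.log ((min (T : ℝ≥0∞) (Vval 𝓜)).toReal)

/-- An online estimation oracle for the class `𝓜` with estimation-error bound `Est`. -/
structure EstOracle (X Y : Type) [MeasurableSpace X] [MeasurableSpace Y]
    (𝓜 : Set (Model X Y)) (Est : ℝ → ℝ → ℝ) where
  est : (T' : ℕ) → (δ' : ℝ) → (n : ℕ) → Hist X Y n → Model X Y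
  est_mem : ∀ T' δ' n h, est T' δ' n h ∈ convHull 𝓜
  guarantee : ∀ (T' : ℕ) (δ' : ℝ), 0 < δ' → ∀ Mstar ∈ 𝓜, ∀ A : RegAlg X Y,
    ((histLaw Mstar A.sel T')
      {h : Hist X Y T' |
        (∑ t : Fin T',
          ∫ x, sqHellinger (Mstar.k x)
              ((est T' δ' (t : ℕ) (hPrefix h (t : ℕ) t.2.le)).k x)
            ∂(A.sel (t : ℕ) (hPrefix h (t : ℕ) t.2.le)))
          ≤ Est (T' : ℝ) δ'}).toReal ≥ 1 - δ'

/-- A constrained online estimation oracle for the class `𝓜`. -/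
structure CEstOracle (X Y : Type) [MeasurableSpace X] [MeasurableSpace Y]
    (𝓜 : Set (Model X Y)) (Est : ℝ → ℝ → ℝ) where
  est : (𝓜' : Set (Model X Y)) → (T' : ℕ) → (δ' : ℝ) → (n : ℕ) → Hist X Y n → Model X Y
  est_mem : ∀ 𝓜', 𝓜' ⊆ 𝓜 → ∀ T' δ' n h, est 𝓜' T' δ' n h ∈ convHull 𝓜'
  guarantee : ∀ 𝓜', 𝓜' ⊆ 𝓜 → ∀ (T' : ℕ) (δ' : ℝ), 0 < δ' → ∀ Mstar ∈ 𝓜',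
    ∀ A : RegAlg X Y,
    ((histLaw Mstar A.sel T')
      {h : Hist X Y T' |
        (∑ t : Fin T',
          ∫ x, sqHellinger (Mstar.k x)
              ((est 𝓜' T' δ' (t : ℕ) (hPrefix h (t : ℕ) t.2.le)).k x)
            ∂(A.sel (t : ℕ) (hPrefix h (t : ℕ) t.2.le)))
          ≤ Est (T' : ℝ) δ'}).toReal ≥ 1 - δ'

/-- A packaged (decision space, observation space) pair. -/
structure MSpace where
  (X : Type)
  (Y : Type)
  [iX : MeasurableSpace X]
  [iY : MeasurableSpace Y]
  [nX : Nonempty X]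

attribute [instance] MSpace.iX MSpace.iY MSpace.nX

end


noncomputable section AuxProofHelpers

lemma sqHellinger_nonneg' {Z : Type} [MeasurableSpace Z] (P Q : MeasureTheory.Measure Z) :
    0 ≤ sqHellinger P Q := MeasureTheory.integral_nonneg fun _ => sq_nonneg _

lemma sqHellinger_self' {Z : Type} [MeasurableSpace Z] (P : MeasureTheory.Measure Z) :
    sqHellinger P P = 0 := by simp [sqHellinger]

lemma my_integrable_of_bound {Z : Type} [MeasurableSpace Z] {μ : Measure Z} [IsFiniteMeasure μ]
    {g : Z → ℝ} (hg : AEStronglyMeasurable g μ) (C : ℝ) (h : ∀ᵐ z ∂μ, |g z| ≤ C) :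
    Integrable g μ :=
  Integrable.mono' (integrable_const C) hg (by simpa [Real.norm_eq_abs] using h)

lemma abs_integral_sub_le {Z : Type} [MeasurableSpace Z] (P Q : Measure Z)
    [IsProbabilityMeasure P] [IsProbabilityMeasure Q] {f : Z → ℝ} (hf : Measurable f)
    (h0 : ∀ z, 0 ≤ f z) (h1 : ∀ z, f z ≤ 1) :
    |∫ z, f z ∂P - ∫ z, f z ∂Q| ≤ Real.sqrt (sqHellinger P Q) := by
  have hPρ : P ≪ P + Q := Measure.AbsolutelyContinuous.rfl.add_right Q
  have hQρ : Q ≪ P + Q := by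
    have h := Measure.AbsolutelyContinuous.rfl.add_right P (μ := Q)
    rwa [add_comm] at h
  set ρ : Measure Z := P + Q with hρdef
  set pd : Z → ℝ := fun z => (P.rnDeriv ρ z).toReal with hpddef
  set qd : Z → ℝ := fun z => (Q.rnDeriv ρ z).toReal with hqddef
  have hpdm : Measurable pd := (Measure.measurable_rnDeriv P ρ).ennreal_toReal
  have hqdm : Measurable qd := (Measure.measurable_rnDeriv Q ρ).ennreal_toReal
  have hpd0 : ∀ z, 0 ≤ pd z := fun z => ENNReal.toReal_nonneg
  have hqd0 : ∀ z, 0 ≤ qd z := fun z => ENNReal.toReal_nonneg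
  have hsum : ∀ᵐ z ∂ρ, pd z + qd z = 1 := by
    have hadd := Measure.rnDeriv_add P Q ρ
    have hself := Measure.rnDeriv_self ρ
    have hPlt := Measure.rnDeriv_lt_top P ρ
    have hQlt := Measure.rnDeriv_lt_top Q ρ
    filter_upwards [hadd, hself, hPlt, hQlt] with z h1z h2z h3z h4z
    have h5 : P.rnDeriv ρ z + Q.rnDeriv ρ z = 1 := by
      rw [← Pi.add_apply, ← h1z]
      exact h2z
    rw [hpddef, hqddef]
    simp only
    rw [← ENNReal.toReal_add h3z.ne h4z.ne, h5, ENNReal.toReal_one]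
  have hpd1 : ∀ᵐ z ∂ρ, pd z ≤ 1 := hsum.mono fun z hz => by nlinarith [hqd0 z]
  have hqd1 : ∀ᵐ z ∂ρ, qd z ≤ 1 := hsum.mono fun z hz => by nlinarith [hpd0 z]
  -- integral identities
  have hIP : ∫ z, f z ∂P = ∫ z, pd z * f z ∂ρ := by
    have h := MeasureTheory.integral_rnDeriv_smul hPρ (f := f)
    simp only [smul_eq_mul] at h
    exact h.symm
  have hIQ : ∫ z, f z ∂Q = ∫ z, qd z * f z ∂ρ := by
    have h := MeasureTheory.integral_rnDeriv_smul hQρ (f := f)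
    simp only [smul_eq_mul] at h
    exact h.symm
  have hI1P : ∫ z, pd z ∂ρ = 1 := by
    have h := MeasureTheory.integral_rnDeriv_smul hPρ (f := fun _ => (1 : ℝ))
    simpa using h
  have hI1Q : ∫ z, qd z ∂ρ = 1 := by
    have h := MeasureTheory.integral_rnDeriv_smul hQρ (f := fun _ => (1 : ℝ))
    simpa using h
  -- integrability
  have hintpd : Integrable pd ρ :=
    my_integrable_of_bound hpdm.aestronglyMeasurable 1
      (hpd1.mono fun z hz => by rw [abs_of_nonneg (hpd0 z)]; exact hz)
  have hintqd : Integrable qd ρ :=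
    my_integrable_of_bound hqdm.aestronglyMeasurable 1
      (hqd1.mono fun z hz => by rw [abs_of_nonneg (hqd0 z)]; exact hz)
  have hintpf : Integrable (fun z => pd z * f z) ρ :=
    my_integrable_of_bound (hpdm.mul hf).aestronglyMeasurable 1
      (hpd1.mono fun z hz => by
        rw [abs_mul, abs_of_nonneg (hpd0 z), abs_of_nonneg (h0 z)]
        nlinarith [h1 z, h0 z, hpd0 z])
  have hintqf : Integrable (fun z => qd z * f z) ρ :=
    my_integrable_of_bound (hqdm.mul hf).aestronglyMeasurable 1
      (hqd1.mono fun z hz => by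
        rw [abs_mul, abs_of_nonneg (hqd0 z), abs_of_nonneg (h0 z)]
        nlinarith [h1 z, h0 z, hqd0 z])
  have hintmid : Integrable (fun z => (f z - 1/2) * (pd z - qd z)) ρ := by
    have hfun : (fun z => (f z - 1/2) * (pd z - qd z))
        = fun z => (pd z * f z - qd z * f z) - (1/2) * (pd z - qd z) := by
      funext z; ring
    rw [hfun]
    exact (hintpf.sub hintqf).sub ((hintpd.sub hintqd).const_mul _)
  have hdiff : ∫ z, f z ∂P - ∫ z, f z ∂Q = ∫ z, (f z - 1/2) * (pd z - qd z) ∂ρ := by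
    have h0' : ∫ z, (pd z - qd z) ∂ρ = 0 := by
      rw [integral_sub hintpd hintqd, hI1P, hI1Q]; ring
    have hintsub : Integrable (fun z => pd z - qd z) ρ := hintpd.sub hintqd
    have hintc : Integrable (fun z => (1/2 : ℝ) * (pd z - qd z)) ρ := hintsub.const_mul _
    calc ∫ z, f z ∂P - ∫ z, f z ∂Q
        = ∫ z, (pd z * f z - qd z * f z) ∂ρ := by
          rw [hIP, hIQ, integral_sub hintpf hintqf]
      _ = ∫ z, ((f z - 1/2) * (pd z - qd z) + (1/2) * (pd z - qd z)) ∂ρ := by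
          apply integral_congr_ae; apply Filter.Eventually.of_forall; intro z; ring
      _ = ∫ z, (f z - 1/2) * (pd z - qd z) ∂ρ + (1/2) * ∫ z, (pd z - qd z) ∂ρ := by
          rw [integral_add hintmid hintc, integral_const_mul]
      _ = ∫ z, (f z - 1/2) * (pd z - qd z) ∂ρ := by rw [h0']; ring
  set A : Z → ℝ := fun z => Real.sqrt (pd z) with hAdef
  set B : Z → ℝ := fun z => Real.sqrt (qd z) with hBdef
  have hA2 : ∀ z, A z ^ 2 = pd z := fun z => Real.sq_sqrt (hpd0 z)
  have hB2 : ∀ z, B z ^ 2 = qd z := fun z => Real.sq_sqrt (hqd0 z)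
  have hAm : Measurable A := hpdm.sqrt
  have hBm : Measurable B := hqdm.sqrt
  have hA0 : ∀ z, 0 ≤ A z := fun z => Real.sqrt_nonneg _
  have hB0 : ∀ z, 0 ≤ B z := fun z => Real.sqrt_nonneg _
  have hA1 : ∀ᵐ z ∂ρ, A z ≤ 1 := hpd1.mono fun z hz => Real.sqrt_le_one.mpr hz
  have hB1 : ∀ᵐ z ∂ρ, B z ≤ 1 := hqd1.mono fun z hz => Real.sqrt_le_one.mpr hz
  set F : Z → ℝ := fun z => |(f z - 1/2) * (A z + B z)| with hFdef
  set G : Z → ℝ := fun z => |A z - B z| with hGdef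
  have hFm : Measurable F := ((hf.sub measurable_const).mul (hAm.add hBm)).abs
  have hGm : Measurable G := (hAm.sub hBm).abs
  have hF1 : ∀ᵐ z ∂ρ, F z ≤ 1 := by
    filter_upwards [hA1, hB1] with z hza hzb
    rw [hFdef]
    simp only
    rw [abs_mul]
    have h1' : |f z - 1/2| ≤ 1/2 := by rw [abs_le]; constructor <;> nlinarith [h0 z, h1 z]
    have h2' : |A z + B z| ≤ 2 := by
      rw [abs_of_nonneg (by positivity)]
      linarith [hA0 z, hB0 z]
    calc |f z - 1/2| * |A z + B z| ≤ (1/2) * 2 :=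
          mul_le_mul h1' h2' (abs_nonneg _) (by norm_num)
      _ = 1 := by norm_num
  have hG2 : ∀ᵐ z ∂ρ, G z ≤ 2 := by
    filter_upwards [hA1, hB1] with z hza hzb
    rw [hGdef]
    simp only
    rw [abs_le]
    constructor <;> [linarith [hA0 z, hB0 z]; linarith [hA0 z, hB0 z]]
  have hconj : Real.HolderConjugate 2 2 := Real.holderConjugate_iff.mpr ⟨one_lt_two, by norm_num⟩
  have hmemF : MemLp F (ENNReal.ofReal 2) ρ :=
    MemLp.of_bound hFm.aestronglyMeasurable 1
      (hF1.mono fun z hz => by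
        rw [Real.norm_eq_abs, abs_of_nonneg (abs_nonneg _)]; exact hz)
  have hmemG : MemLp G (ENNReal.ofReal 2) ρ :=
    MemLp.of_bound hGm.aestronglyMeasurable 2
      (hG2.mono fun z hz => by
        rw [Real.norm_eq_abs, abs_of_nonneg (abs_nonneg _)]; exact hz)
  have hCS := integral_mul_le_Lp_mul_Lq_of_nonneg hconj
    (Filter.Eventually.of_forall fun z => abs_nonneg ((f z - 1/2) * (A z + B z)))
    (Filter.Eventually.of_forall fun z => abs_nonneg (A z - B z)) hmemF hmemG
  have hrp : ∀ x : ℝ, x ^ (2:ℝ) = x ^ 2 := fun x => by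
    rw [show (2:ℝ) = ((2:ℕ):ℝ) by norm_num, Real.rpow_natCast]
  have hF2le : ∫ z, F z ^ (2:ℝ) ∂ρ ≤ 1 := by
    have hpt : ∀ z, F z ^ (2:ℝ) ≤ (1/2) * (pd z + qd z) := by
      intro z
      rw [hrp, hFdef]
      simp only
      rw [sq_abs]
      have hab : (A z + B z)^2 ≤ 2 * (pd z + qd z) := by
        nlinarith [sq_nonneg (A z - B z), hA2 z, hB2 z]
      have hf2 : (f z - 1/2)^2 ≤ 1/4 := by nlinarith [h0 z, h1 z]
      calc ((f z - 1/2) * (A z + B z))^2 = (f z - 1/2)^2 * (A z + B z)^2 := by ring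
        _ ≤ (1/4) * (2 * (pd z + qd z)) := by
            nlinarith [sq_nonneg (A z + B z), sq_nonneg (f z - 1/2)]
        _ = (1/2) * (pd z + qd z) := by ring
    have hintF2 : Integrable (fun z => F z ^ (2:ℝ)) ρ := by
      have : (fun z => F z ^ (2:ℝ)) = fun z => F z ^ 2 := funext fun z => hrp _
      rw [this]
      exact my_integrable_of_bound (hFm.pow_const 2).aestronglyMeasurable 1
        (hF1.mono fun z hz => by
          rw [abs_of_nonneg (sq_nonneg _)]
          nlinarith [abs_nonneg ((f z - 1/2) * (A z + B z))])
    have hintRHS : Integrable (fun z => (1/2 : ℝ) * (pd z + qd z)) ρ := by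
      have h' : Integrable (fun z => pd z + qd z) ρ := hintpd.add hintqd
      exact h'.const_mul _
    calc ∫ z, F z ^ (2:ℝ) ∂ρ ≤ ∫ z, (1/2) * (pd z + qd z) ∂ρ :=
          integral_mono hintF2 hintRHS hpt
      _ = 1 := by
          rw [integral_const_mul, integral_add hintpd hintqd, hI1P, hI1Q]; norm_num
  have hGeq : ∫ z, G z ^ (2:ℝ) ∂ρ = sqHellinger P Q := by
    have h1' : ∫ z, G z ^ (2:ℝ) ∂ρ = ∫ z, (A z - B z) ^ 2 ∂ρ := by
      apply integral_congr_ae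
      apply Filter.Eventually.of_forall
      intro z
      rw [hGdef]
      simp only
      rw [hrp, sq_abs]
    rw [h1']
    rfl
  have hptwise : ∀ z, |(f z - 1/2) * (pd z - qd z)| = F z * G z := by
    intro z
    have h : (f z - 1/2) * (pd z - qd z) = ((f z - 1/2) * (A z + B z)) * (A z - B z) := by
      rw [← hA2 z, ← hB2 z]; ring
    rw [h, abs_mul]
  have hF2nonneg : 0 ≤ ∫ z, F z ^ (2:ℝ) ∂ρ :=
    integral_nonneg fun z => Real.rpow_nonneg (abs_nonneg _) _
  have hG2nonneg : 0 ≤ ∫ z, G z ^ (2:ℝ) ∂ρ :=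
    integral_nonneg fun z => Real.rpow_nonneg (abs_nonneg _) _
  calc |∫ z, f z ∂P - ∫ z, f z ∂Q|
      = |∫ z, (f z - 1/2) * (pd z - qd z) ∂ρ| := by rw [hdiff]
    _ ≤ ∫ z, |(f z - 1/2) * (pd z - qd z)| ∂ρ := by
        simpa only [Real.norm_eq_abs] using
          norm_integral_le_integral_norm (μ := ρ) fun z => (f z - 1/2) * (pd z - qd z)
    _ = ∫ z, F z * G z ∂ρ := integral_congr_ae (Filter.Eventually.of_forall hptwise)
    _ ≤ (∫ z, F z ^ (2:ℝ) ∂ρ) ^ ((1:ℝ)/2) * (∫ z, G z ^ (2:ℝ) ∂ρ) ^ ((1:ℝ)/2) := hCS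
    _ ≤ 1 * Real.sqrt (sqHellinger P Q) := by
        apply mul_le_mul
        · calc (∫ z, F z ^ (2:ℝ) ∂ρ) ^ ((1:ℝ)/2) ≤ (1:ℝ) ^ ((1:ℝ)/2) :=
              Real.rpow_le_rpow hF2nonneg hF2le (by norm_num)
            _ = 1 := Real.one_rpow _
        · rw [hGeq, ← Real.sqrt_eq_rpow]
        · exact Real.rpow_nonneg hG2nonneg _
        · exact zero_le_one
    _ = Real.sqrt (sqHellinger P Q) := one_mul _


section ModelHelpers

variable {X Y : Type} [MeasurableSpace X] [MeasurableSpace Y]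

def rclip : ℝ → ℝ := fun t => max 0 (min t 1)

lemma rclip_nonneg (t : ℝ) : 0 ≤ rclip t := le_max_left _ _

lemma rclip_le_one (t : ℝ) : rclip t ≤ 1 := max_le (by norm_num) (min_le_right _ _)

lemma measurable_rclip : Measurable rclip :=
  measurable_const.max (measurable_id.min measurable_const)

lemma model_ae (M : Model X Y) (x : X) : ∀ᵐ ry ∂(M.k x), ry.1 ∈ Set.Icc (0:ℝ) 1 := by
  rw [MeasureTheory.ae_iff, ← Set.compl_setOf]
  exact M.reward01 x

lemma prob_k (M : Model X Y) (x : X) : IsProbabilityMeasure (M.k x) := by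
  haveI := M.markov; infer_instance

lemma fm_eq (M : Model X Y) (x : X) : fm M x = ∫ ry, rclip ry.1 ∂(M.k x) := by
  apply integral_congr_ae
  filter_upwards [model_ae M x] with ry hry
  simp only [rclip]
  rw [min_eq_left hry.2, max_eq_right hry.1]

lemma integrable_rclip (M : Model X Y) (x : X) :
    Integrable (fun ry : ℝ × Y => rclip ry.1) (M.k x) := by
  haveI := prob_k M x
  exact my_integrable_of_bound (measurable_rclip.comp measurable_fst).aestronglyMeasurable 1
    (Filter.Eventually.of_forall fun ry => by
      rw [abs_of_nonneg (rclip_nonneg _)]; exact rclip_le_one _)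

lemma fm_nonneg (M : Model X Y) (x : X) : 0 ≤ fm M x := by
  rw [fm_eq]; exact integral_nonneg fun ry => rclip_nonneg _

lemma fm_le_one (M : Model X Y) (x : X) : fm M x ≤ 1 := by
  haveI := prob_k M x
  rw [fm_eq]
  calc ∫ ry, rclip ry.1 ∂(M.k x) ≤ ∫ _ry, (1:ℝ) ∂(M.k x) :=
        integral_mono (integrable_rclip M x) (integrable_const 1) fun ry => rclip_le_one _
    _ = 1 := by simp

lemma fm_measurable (M : Model X Y) : Measurable (fm M) := by
  haveI := M.markov
  have heq : fm M = fun x => (∫⁻ ry, ENNReal.ofReal (rclip ry.1) ∂(M.k x)).toReal := by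
    funext x
    rw [fm_eq, integral_eq_lintegral_of_nonneg_ae
      (Filter.Eventually.of_forall fun ry => rclip_nonneg _)
      (measurable_rclip.comp measurable_fst).aestronglyMeasurable]
  rw [heq]
  exact (Measurable.lintegral_kernel
    (ENNReal.measurable_ofReal.comp (measurable_rclip.comp measurable_fst))).ennreal_toReal

lemma gap_nonneg (M : Model X Y) (x : X) : 0 ≤ gap M x := sub_nonneg.mpr (M.opt_max x)

lemma gap_le_one (M : Model X Y) (x : X) : gap M x ≤ 1 := by
  have h1 := fm_le_one M M.opt
  have h2 := fm_nonneg M x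
  unfold gap; linarith

lemma integrable_gap (M : Model X Y) (μ : Measure X) [IsFiniteMeasure μ] :
    Integrable (fun x => gap M x) μ :=
  my_integrable_of_bound (measurable_const.sub (fm_measurable M)).aestronglyMeasurable 1
    (Filter.Eventually.of_forall fun x => by
      rw [abs_of_nonneg (gap_nonneg M x)]; exact gap_le_one M x)

lemma avgGap_nonneg (p : ProbabilityMeasure X) (M : Model X Y) : 0 ≤ avgGap p M :=
  integral_nonneg fun x => gap_nonneg M x

lemma avgGap_le_one (p : ProbabilityMeasure X) (M : Model X Y) : avgGap p M ≤ 1 := by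
  unfold avgGap
  calc ∫ x, gap M x ∂(p : Measure X) ≤ ∫ _x, (1:ℝ) ∂(p : Measure X) :=
        integral_mono (integrable_gap M _) (integrable_const 1) fun x => gap_le_one M x
    _ = 1 := by simp

lemma avgHell_nonneg (p : ProbabilityMeasure X) (M Mbar : Model X Y) :
    0 ≤ avgHell p M Mbar :=
  integral_nonneg fun x => sqHellinger_nonneg' _ _

lemma avgHell_self (p : ProbabilityMeasure X) (Mbar : Model X Y) :
    avgHell p Mbar Mbar = 0 := by simp [avgHell, sqHellinger_self']

lemma fm_diff_le (M Mbar : Model X Y) (x : X) :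
    |fm Mbar x - fm M x| ≤ Real.sqrt (sqHellinger (M.k x) (Mbar.k x)) := by
  haveI := prob_k M x; haveI := prob_k Mbar x
  rw [fm_eq, fm_eq, abs_sub_comm]
  exact abs_integral_sub_le (M.k x) (Mbar.k x) (measurable_rclip.comp measurable_fst)
    (fun z => rclip_nonneg _) (fun z => rclip_le_one _)

lemma sqrt_le_young {s γ : ℝ} (hs : 0 ≤ s) (hγ : 0 < γ) :
    Real.sqrt s ≤ γ/2 * s + 1/(2*γ) := by
  have h1 : 0 ≤ (γ * Real.sqrt s - 1)^2 := sq_nonneg _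
  have h2 := Real.sq_sqrt hs
  have h3 : 2*γ*Real.sqrt s ≤ γ^2*s + 1 := by nlinarith
  have h4 : Real.sqrt s ≤ (γ^2*s+1)/(2*γ) := by
    rw [le_div_iff₀ (by linarith)]; linarith
  calc Real.sqrt s ≤ (γ^2*s+1)/(2*γ) := h4
    _ = γ/2*s + 1/(2*γ) := by field_simp

end ModelHelpers

end AuxProofHelpers

/-- localized offset DEC bounded by constrained DEC. -/
theorem offset_localized_le_constrained {X Y : Type} [MeasurableSpace X] [MeasurableSpace Y]
    [Nonempty X] (𝓜 : Set (Model X Y)) (Mbar : Model X Y) (α γ : ℝ)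
    (hα : 0 < α) (hγ : 0 < γ) :
    (∀ ε : ℝ, 0 < ε →
      decO γ (locClass α 𝓜 Mbar ∪ {Mbar}) Mbar ≤
        decC ε (𝓜 ∪ {Mbar}) Mbar + max 0 (α + 1 / (2 * γ) - γ * ε ^ 2 / 2)) ∧
    decO γ (locClass α 𝓜 Mbar ∪ {Mbar}) Mbar ≤
      decC (Real.sqrt (2 * α / γ)) (𝓜 ∪ {Mbar}) Mbar + 1 / (2 * γ) := by
    classical
  haveI : Nonempty (ProbabilityMeasure X) :=
    ⟨⟨MeasureTheory.Measure.dirac (Classical.arbitrary X), inferInstance⟩⟩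
  set 𝓛 : Set (Model X Y) := locClass α 𝓜 Mbar ∪ {Mbar} with h𝓛
  have hval_le_one : ∀ (p : MeasureTheory.ProbabilityMeasure X) (M : Model X Y),
      avgGap p M - γ * avgHell p M Mbar ≤ 1 := by
    intro p M
    have h1 := avgGap_le_one p M
    have h2 := avgHell_nonneg p M Mbar
    nlinarith
  have hFbdd : ∀ p : MeasureTheory.ProbabilityMeasure X,
      BddAbove (Set.range fun M : Model X Y =>
        ⨆ _ : M ∈ 𝓛, (avgGap p M - γ * avgHell p M Mbar)) := by
    intro p
    refine ⟨1, ?_⟩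
    rintro y ⟨M, rfl⟩
    exact Real.iSup_le (fun _ => hval_le_one p M) zero_le_one
  have hMbar𝓛 : Mbar ∈ 𝓛 := Set.mem_union_right _ rfl
  have hF0 : ∀ p : MeasureTheory.ProbabilityMeasure X,
      0 ≤ ⨆ M ∈ 𝓛, (avgGap p M - γ * avgHell p M Mbar) := by
    intro p
    calc (0:ℝ) ≤ avgGap p Mbar - γ * avgHell p Mbar Mbar := by
          rw [avgHell_self]; simpa using avgGap_nonneg p Mbar
      _ = ⨆ _ : Mbar ∈ 𝓛, (avgGap p Mbar - γ * avgHell p Mbar Mbar) :=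
          (ciSup_pos (f := fun _ : Mbar ∈ 𝓛 => avgGap p Mbar - γ * avgHell p Mbar Mbar)
            hMbar𝓛).symm
      _ ≤ ⨆ M ∈ 𝓛, (avgGap p M - γ * avgHell p M Mbar) := le_ciSup (hFbdd p) Mbar
  have hmain : ∀ ε : ℝ, 0 < ε →
      decO γ 𝓛 Mbar ≤ decC ε (𝓜 ∪ {Mbar}) Mbar + max 0 (α + 1 / (2 * γ) - γ * ε ^ 2 / 2) := by
    intro ε hε
    have hc0 : (0:ℝ) ≤ max 0 (α + 1 / (2 * γ) - γ * ε ^ 2 / 2) := le_max_left _ _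
    set c : ℝ := max 0 (α + 1 / (2 * γ) - γ * ε ^ 2 / 2) with hcdef
    have hper : ∀ p : MeasureTheory.ProbabilityMeasure X,
        (⨆ M ∈ 𝓛, (avgGap p M - γ * avgHell p M Mbar)) ≤
          (⨆ M ∈ {M ∈ 𝓜 ∪ {Mbar} | avgHell p M Mbar ≤ ε ^ 2}, avgGap p M) + c := by
      intro p
      set S : Set (Model X Y) := {M ∈ 𝓜 ∪ {Mbar} | avgHell p M Mbar ≤ ε ^ 2} with hSdef
      have hGbdd : BddAbove (Set.range fun M : Model X Y => ⨆ _ : M ∈ S, avgGap p M) := by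
        refine ⟨1, ?_⟩
        rintro y ⟨M, rfl⟩
        exact Real.iSup_le (fun _ => avgGap_le_one p M) zero_le_one
      have hMbarS : Mbar ∈ S := by
        refine ⟨Set.mem_union_right _ rfl, ?_⟩
        rw [avgHell_self]
        positivity
      have hGp : ∀ M, M ∈ S → avgGap p M ≤ ⨆ M ∈ S, avgGap p M := by
        intro M hM
        calc avgGap p M = ⨆ _ : M ∈ S, avgGap p M :=
              (ciSup_pos (f := fun _ : M ∈ S => avgGap p M) hM).symm
          _ ≤ _ := le_ciSup hGbdd M
      have hG0 : 0 ≤ ⨆ M ∈ S, avgGap p M :=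
        le_trans (avgGap_nonneg p Mbar) (hGp Mbar hMbarS)
      have hkey : ∀ M, M ∈ 𝓛 →
          avgGap p M - γ * avgHell p M Mbar ≤ (⨆ M ∈ S, avgGap p M) + c := by
        intro M hM
        rcases hM with hMloc | hMeq
        · obtain ⟨hM𝓜, hMα⟩ := hMloc
          by_cases hh : avgHell p M Mbar ≤ ε ^ 2
          · have hMS : M ∈ S := ⟨Set.mem_union_left _ hM𝓜, hh⟩
            have h1 := hGp M hMS
            have hγh : 0 ≤ γ * avgHell p M Mbar :=
              mul_nonneg hγ.le (avgHell_nonneg _ _ _)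
            linarith
          · push_neg at hh
            have hint : MeasureTheory.Integrable
                (fun x => sqHellinger (M.k x) (Mbar.k x)) (p : MeasureTheory.Measure X) := by
              by_contra hni
              have hz : avgHell p M Mbar = 0 := MeasureTheory.integral_undef hni
              rw [hz] at hh
              nlinarith
            have hgap_pt : ∀ x, gap M x - gap Mbar x ≤
                (α + 1/(2*γ)) + γ/2 * sqHellinger (M.k x) (Mbar.k x) := by
              intro x
              have h1 : fm M M.opt ≤ fm Mbar Mbar.opt + α := hMα
              have h2 : fm Mbar x - fm M x ≤ |fm Mbar x - fm M x| := le_abs_self _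
              have h3 := fm_diff_le M Mbar x
              have h4 := sqrt_le_young (sqHellinger_nonneg' (M.k x) (Mbar.k x)) hγ
              unfold gap
              linarith
            have hintdiff : MeasureTheory.Integrable (fun x => gap M x - gap Mbar x)
                (p : MeasureTheory.Measure X) :=
              (integrable_gap M _).sub (integrable_gap Mbar _)
            have hintR : MeasureTheory.Integrable
                (fun x => (α + 1/(2*γ)) + γ/2 * sqHellinger (M.k x) (Mbar.k x))
                (p : MeasureTheory.Measure X) :=
              (MeasureTheory.integrable_const _).add (hint.const_mul _)
            have hsplit : avgGap p M - avgGap p Mbar =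
                ∫ x, (gap M x - gap Mbar x) ∂(p : MeasureTheory.Measure X) :=
              (MeasureTheory.integral_sub (integrable_gap M _) (integrable_gap Mbar _)).symm
            have hRint : ∫ x, ((α + 1/(2*γ)) + γ/2 * sqHellinger (M.k x) (Mbar.k x))
                ∂(p : MeasureTheory.Measure X) = (α + 1/(2*γ)) + γ/2 * avgHell p M Mbar := by
              rw [MeasureTheory.integral_add (MeasureTheory.integrable_const _)
                (hint.const_mul _), MeasureTheory.integral_const,
                MeasureTheory.integral_const_mul]
              simp [avgHell]
            have hmono := MeasureTheory.integral_mono hintdiff hintR fun x => hgap_pt x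
            rw [← hsplit, hRint] at hmono
            have hle2 : γ/2 * (ε ^ 2) ≤ γ/2 * avgHell p M Mbar :=
              mul_le_mul_of_nonneg_left hh.le (by positivity)
            have hsup := hGp Mbar hMbarS
            have hcge : α + 1 / (2 * γ) - γ * ε ^ 2 / 2 ≤ c := le_max_right _ _
            have hfin : avgGap p M - γ * avgHell p M Mbar ≤
                avgGap p Mbar + (α + 1 / (2 * γ) - γ * ε ^ 2 / 2) := by
              nlinarith [avgHell_nonneg p M Mbar]
            linarith
        · rw [Set.mem_singleton_iff] at hMeq
          subst hMeq
          rw [avgHell_self]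
          have h1 := hGp M hMbarS
          simp only [mul_zero, sub_zero]
          linarith
      refine Real.iSup_le (fun M => ?_) (by linarith)
      exact Real.iSup_le (fun hM => hkey M hM) (by linarith)
    have hdecO_le : ∀ p : MeasureTheory.ProbabilityMeasure X,
        decO γ 𝓛 Mbar ≤ ⨆ M ∈ 𝓛, (avgGap p M - γ * avgHell p M Mbar) := by
      intro p
      have hbdd : BddBelow (Set.range fun q : MeasureTheory.ProbabilityMeasure X =>
          ⨆ M ∈ 𝓛, (avgGap q M - γ * avgHell q M Mbar)) := by
        refine ⟨0, ?_⟩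
        rintro y ⟨q, rfl⟩
        exact hF0 q
      exact ciInf_le hbdd p
    have hstep : ∀ p : MeasureTheory.ProbabilityMeasure X, decO γ 𝓛 Mbar - c ≤
        ⨆ M ∈ {M ∈ 𝓜 ∪ {Mbar} | avgHell p M Mbar ≤ ε ^ 2}, avgGap p M := by
      intro p
      have h1 := hper p
      have h2 := hdecO_le p
      linarith
    have hfinal : decO γ 𝓛 Mbar - c ≤ decC ε (𝓜 ∪ {Mbar}) Mbar := le_ciInf hstep
    linarith
  refine ⟨hmain, ?_⟩
  have h2 := hmain (Real.sqrt (2 * α / γ)) (Real.sqrt_pos.mpr (div_pos (by linarith) hγ))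
  have hsq : Real.sqrt (2 * α / γ) ^ 2 = 2 * α / γ := Real.sq_sqrt (le_of_lt (div_pos (by linarith) hγ))
  rw [hsq] at h2
  have hmax : max 0 (α + 1 / (2 * γ) - γ * (2 * α / γ) / 2) = 1 / (2 * γ) := by
    have hval : α + 1 / (2 * γ) - γ * (2 * α / γ) / 2 = 1 / (2 * γ) := by
      field_simp
      ring
    rw [hval, max_eq_right (div_nonneg zero_le_one (by linarith))]
  rw [hmax] at h2
  exact h2
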